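/- Let γ: I → M be a Legendre curve with null normal in a 3-dimensional normal almost paracontact metric manifold M. Then α∘γ = ± g(N, φγ̇) ≠ 0, and the Cartan data of γ satisfy T = γ̇, N = −α(ξ ± φγ̇), W = (−1/(2α))(ξ ∓ φγ̇) and κ = α′/α ± β, where α, β denote the compositions with γ of 2α = Trace{X ↦ ∇_X ξ}, 2β = Trace{X ↦ φ∇_X ξ}, and α′ is the derivative of α∘γ. -/

import Mathlib

/-- The data, along a curve `γ : I → M`, of a 3-dimensional almost paracontact
metric manifold `(M, φ, ξ, η, g)`: the pullback tangent bundle is trivialized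
over a real vector space `V`; `g t`, `phi t`, `xi t` are the metric, the
structure tensor and the Reeb field at the point `γ t`, and `T t = γ̇(t)` is
the velocity of the curve.  The 1-form `η` is recovered as `η(v) = g v ξ`.
The axioms record: `η(ξ) = 1`, `φξ = 0`, `φ² = Id − η ⊗ ξ`,
`g(φv, φw) = −g(v,w) + η(v)η(w)`, symmetry of `g`, and that `g` has
signature `(2,1)` (an orthonormal basis with signs `(+,+,−)`). -/
structure APCMCurve (V : Type*) [AddCommGroup V] [Module ℝ V] where
  g : ℝ → V →ₗ[ℝ] V →ₗ[ℝ] ℝ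
  phi : ℝ → V →ₗ[ℝ] V
  xi : ℝ → V
  T : ℝ → V
  g_symm : ∀ t v w, g t v w = g t w v
  xi_unit : ∀ t, g t (xi t) (xi t) = 1
  phi_xi : ∀ t, phi t (xi t) = 0
  phi_sq : ∀ t v, phi t (phi t v) = v - g t v (xi t) • xi t
  compat : ∀ t v w, g t (phi t v) (phi t w) = -(g t v w) + g t v (xi t) * g t w (xi t)
  signature : ∀ t, ∃ e : Module.Basis (Fin 3) ℝ V,
    g t (e 0) (e 0) = 1 ∧ g t (e 1) (e 1) = 1 ∧ g t (e 2) (e 2) = -1 ∧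
    g t (e 0) (e 1) = 0 ∧ g t (e 0) (e 2) = 0 ∧ g t (e 1) (e 2) = 0

/-- The data, along a curve `γ`, of a 3-dimensional *normal* almost paracontact
metric manifold: in addition to `APCMCurve`, `D` is the covariant derivative
along `γ` (induced by the Levi-Civita connection `∇` of `g`), and
`a = α ∘ γ`, `b = β ∘ γ` are the compositions with `γ` of the structure
functions `α`, `β` of the normal structure (those with
`2α = Trace{X ↦ ∇_X ξ}`, `2β = Trace{X ↦ φ∇_X ξ}`), so that along `γ` one has
`∇_{γ̇} ξ = α(γ̇ − η(γ̇)ξ) + βφγ̇` (field `D_xi`) and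
`(∇_{γ̇} φ)A = β(g(γ̇,A)ξ − η(A)γ̇) + α(g(φγ̇,A)ξ − η(A)φγ̇)` for every vector
field `A` along `γ` (field `D_phi`).  `D` is additive, satisfies the Leibniz
rule and is metric-compatible. -/
structure NAPCMCurve (V : Type*) [AddCommGroup V] [Module ℝ V]
    extends APCMCurve V where
  D : (ℝ → V) → (ℝ → V)
  a : ℝ → ℝ
  b : ℝ → ℝ
  D_add : ∀ A B : ℝ → V, D (fun t => A t + B t) = fun t => D A t + D B t
  D_smul : ∀ (f : ℝ → ℝ) (A : ℝ → V) (t : ℝ), DifferentiableAt ℝ f t →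
    D (fun s => f s • A s) t = deriv f t • A t + f t • D A t
  D_metric : ∀ (A B : ℝ → V) (t : ℝ),
    HasDerivAt (fun s => g s (A s) (B s)) (g t (D A t) (B t) + g t (A t) (D B t)) t
  D_xi : ∀ t, D xi t = a t • (T t - g t (T t) (xi t) • xi t) + b t • phi t (T t)
  D_phi : ∀ (A : ℝ → V) (t : ℝ),
    D (fun s => phi s (A s)) t
      = b t • (g t (T t) (A t) • xi t - g t (A t) (xi t) • T t)
        + a t • (g t (phi t (T t)) (A t) • xi t - g t (A t) (xi t) • phi t (T t))
        + phi t (D A t)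

/-!
Along a unit-speed Legendre curve, `T`, `ξ`, `φT` are pairwise orthogonal with norms `1, 1, -1`,
so in dimension 3 they form a frame.  Differentiating `g(T,T) = 1` and `η(T) = 0` gives
`g(N,T) = 0` and `g(N,ξ) = -g(T,∇ξ) = -α`, hence `N = -αξ - cφT` with `c = g(N,φT)`.  As `N` is
null, `c = ±α`, and `α ≠ 0` because `N ≠ 0`.  The null field `W ⊥ T` lies in the Lorentzian
plane spanned by `ξ`, `φT` and is pinned down there by `g(N,W) = 1`.  Finally, differentiating
`g(N,ξ) = -α` gives `-κα + βc = -α'`.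
-/

theorem LinearMap.IsOrthoᵢ.sum_smul_div_eq {K V ι : Type*} [Field K] [AddCommGroup V]
    [Module K V] [FiniteDimensional K V] [Fintype ι] {B : V →ₗ[K] V →ₗ[K] K} {v : ι → V}
    (hO : B.IsOrthoᵢ v) (hv : ∀ i, B (v i) (v i) ≠ 0)
    (hcard : Fintype.card ι = Module.finrank K V) (u : V) :
    ∑ i, (B u (v i) / B (v i) (v i)) • v i = u := by
  let b := basisOfLinearIndependentOfCardEqFinrank' v
    (LinearMap.linearIndependent_of_isOrthoᵢ hO hv) hcard
  have hb : ⇑b = v := coe_basisOfLinearIndependentOfCardEqFinrank' ..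
  have hcoeff : ∀ i, B u (v i) = b.repr u i * B (v i) (v i) := by
    intro i
    conv_lhs => rw [← b.sum_repr u, hb]
    rw [map_sum, LinearMap.sum_apply, Finset.sum_eq_single i (fun j _ hji => by simp [hO hji])
      (by simp)]
    simp
  conv_rhs => rw [← b.sum_repr u, hb]
  simp_rw [hcoeff, mul_div_cancel_right₀ _ (hv _)]

namespace APCMCurve

variable {V : Type*} [AddCommGroup V] [Module ℝ V]

theorem finrank_eq_three (M : APCMCurve V) : Module.finrank ℝ V = 3 := by
  obtain ⟨e, -⟩ := M.signature 0
  simpa using Module.finrank_eq_card_basis e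

theorem finiteDimensional (M : APCMCurve V) : FiniteDimensional ℝ V :=
  Module.finite_of_finrank_eq_succ M.finrank_eq_three

variable (M : APCMCurve V) (t : ℝ)

theorem g_phi_xi (v : V) : M.g t (M.phi t v) (M.xi t) = 0 := by
  have h := M.compat t (M.phi t v) (M.phi t v)
  simp only [M.phi_sq, map_sub, map_smul, LinearMap.sub_apply, LinearMap.smul_apply,
    smul_eq_mul, M.compat t v v, M.xi_unit, M.g_symm t (M.xi t) v] at h
  exact mul_self_eq_zero.mp (by linarith)

theorem g_phi_left (v w : V) : M.g t (M.phi t v) w = -M.g t v (M.phi t w) := by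
  have h := M.compat t v (M.phi t w)
  simp only [M.phi_sq, map_sub, map_smul, smul_eq_mul, g_phi_xi] at h
  linarith

theorem g_self_phi (v : V) : M.g t v (M.phi t v) = 0 := by
  have h := M.g_phi_left t v v
  rw [M.g_symm] at h
  linarith

theorem g_xi_phi (v : V) : M.g t (M.xi t) (M.phi t v) = 0 := by
  rw [M.g_symm, g_phi_xi]

variable {M t}

theorem g_phi_T_phi_T (hTT : M.g t (M.T t) (M.T t) = 1) (hTxi : M.g t (M.T t) (M.xi t) = 0) :
    M.g t (M.phi t (M.T t)) (M.phi t (M.T t)) = -1 := by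
  rw [M.compat, hTT, hTxi]; ring

theorem eq_smul_xi_sub_smul_phi_T (hTT : M.g t (M.T t) (M.T t) = 1)
    (hTxi : M.g t (M.T t) (M.xi t) = 0) {u : V} (huT : M.g t u (M.T t) = 0) :
    u = M.g t u (M.xi t) • M.xi t - M.g t u (M.phi t (M.T t)) • M.phi t (M.T t) := by
  have hxiT : M.g t (M.xi t) (M.T t) = 0 := by rw [M.g_symm, hTxi]
  have hPT : M.g t (M.phi t (M.T t)) (M.T t) = 0 := by rw [M.g_symm, g_self_phi]
  have hO : (M.g t).IsOrthoᵢ ![M.T t, M.xi t, M.phi t (M.T t)] := by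
    rw [LinearMap.isOrthoᵢ_def]
    intro i j hij
    fin_cases i <;> fin_cases j <;> simp_all [g_self_phi, g_phi_xi, g_xi_phi]
  have hself : ∀ i, M.g t (![M.T t, M.xi t, M.phi t (M.T t)] i)
      (![M.T t, M.xi t, M.phi t (M.T t)] i) ≠ 0 := by
    intro i
    fin_cases i <;> simp [hTT, M.xi_unit, g_phi_T_phi_T hTT hTxi]
  have := M.finiteDimensional
  have h := hO.sum_smul_div_eq hself (by simp [M.finrank_eq_three]) u
  simp only [Fin.sum_univ_three, Matrix.cons_val_zero, Matrix.cons_val_one, Matrix.cons_val_two,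
    Matrix.head_cons, Matrix.tail_cons, huT, M.xi_unit, g_phi_T_phi_T hTT hTxi] at h
  rw [zero_div, zero_smul, zero_add, div_neg, div_one, div_one, neg_smul, ← sub_eq_add_neg] at h
  exact h.symm

theorem g_smul_xi_add_smul_phi_T (hTT : M.g t (M.T t) (M.T t) = 1)
    (hTxi : M.g t (M.T t) (M.xi t) = 0) (x y x' y' : ℝ) :
    M.g t (x • M.xi t + y • M.phi t (M.T t)) (x' • M.xi t + y' • M.phi t (M.T t))
      = x * x' - y * y' := by
  simp only [map_add, map_smul, LinearMap.add_apply, LinearMap.smul_apply, smul_eq_mul,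
    M.xi_unit, g_xi_phi, g_phi_xi, g_phi_T_phi_T hTT hTxi]
  ring

theorem eq_of_null_of_g_eq_one (hTT : M.g t (M.T t) (M.T t) = 1)
    (hTxi : M.g t (M.T t) (M.xi t) = 0) {a s : ℝ} (ha : a ≠ 0) (hs : s = 1 ∨ s = -1) {W : V}
    (hNW : M.g t ((-a) • (M.xi t + s • M.phi t (M.T t))) W = 1) (hWW : M.g t W W = 0)
    (hTW : M.g t (M.T t) W = 0) :
    W = (-1 / (2 * a)) • (M.xi t - s • M.phi t (M.T t)) := by
  have hN : (-a) • (M.xi t + s • M.phi t (M.T t))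
      = (-a) • M.xi t + (-a * s) • M.phi t (M.T t) := by module
  obtain ⟨q, r, rfl⟩ : ∃ q r : ℝ, W = q • M.xi t + r • M.phi t (M.T t) :=
    ⟨_, _, by rw [eq_smul_xi_sub_smul_phi_T hTT hTxi ((M.g_symm t W _).trans hTW),
      sub_eq_add_neg, ← neg_smul]⟩
  rw [hN, g_smul_xi_add_smul_phi_T hTT hTxi] at hNW
  rw [g_smul_xi_add_smul_phi_T hTT hTxi, sub_eq_zero] at hWW
  -- `W` is null, so `q = ±r`; pairing with `N` to `1` rules out `q = s r`.
  obtain ⟨rfl, rfl⟩ : q = -1 / (2 * a) ∧ r = s / (2 * a) := by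
    rcases hs with rfl | rfl <;> rcases mul_self_eq_mul_self_iff.mp hWW with rfl | rfl <;>
      first | (exfalso; linarith) | (constructor <;> field_simp <;> linarith)
  module

end APCMCurve

namespace NAPCMCurve

variable {V : Type*} [AddCommGroup V] [Module ℝ V] (M : NAPCMCurve V)

theorem g_D_self_eq_zero {A : ℝ → V} {c : ℝ} (hA : ∀ s, M.g s (A s) (A s) = c) (t : ℝ) :
    M.g t (M.D A t) (A t) = 0 := by
  have h := M.D_metric A A t
  rw [funext hA, M.g_symm t (A t)] at h
  linarith [(hasDerivAt_const t c).unique h]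

theorem D_xi_of_legendre {t : ℝ} (hTxi : M.g t (M.T t) (M.xi t) = 0) :
    M.D M.xi t = M.a t • M.T t + M.b t • M.phi t (M.T t) := by
  rw [M.D_xi, hTxi, zero_smul, sub_zero]

theorem g_D_T_xi {t : ℝ} (hTT : M.g t (M.T t) (M.T t) = 1)
    (hlegendre : ∀ s, M.g s (M.T s) (M.xi s) = 0) : M.g t (M.D M.T t) (M.xi t) = -M.a t := by
  have h := M.D_metric M.T M.xi t
  rw [funext hlegendre, M.D_xi_of_legendre (hlegendre t)] at h
  simp only [map_add, map_smul, smul_eq_mul, hTT, APCMCurve.g_self_phi] at h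
  linarith [(hasDerivAt_const t (0 : ℝ)).unique h]

theorem D_T_eq_of_legendre (hunit : ∀ s, M.g s (M.T s) (M.T s) = 1)
    (hlegendre : ∀ s, M.g s (M.T s) (M.xi s) = 0) (t : ℝ) :
    M.D M.T t
      = (-M.a t) • M.xi t + (-M.g t (M.D M.T t) (M.phi t (M.T t))) • M.phi t (M.T t) := by
  conv_lhs => rw [APCMCurve.eq_smul_xi_sub_smul_phi_T (hunit t) (hlegendre t)
    (M.g_D_self_eq_zero hunit t), M.g_D_T_xi (hunit t) hlegendre]
  module

theorem mul_a_eq_of_D_eq_smul {N : ℝ → V} {κ t : ℝ} (hTxi : M.g t (M.T t) (M.xi t) = 0)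
    (hNxi : ∀ s, M.g s (N s) (M.xi s) = -M.a s) (ha : DifferentiableAt ℝ M.a t)
    (hNT : M.g t (N t) (M.T t) = 0) (hκ : M.D N t = κ • N t) :
    κ * M.a t = deriv M.a t + M.b t * M.g t (N t) (M.phi t (M.T t)) := by
  have h := M.D_metric N M.xi t
  rw [funext hNxi, hκ, M.D_xi_of_legendre hTxi] at h
  simp only [map_add, map_smul, LinearMap.smul_apply, smul_eq_mul, hNxi, hNT] at h
  linarith [ha.hasDerivAt.neg.unique h]

end NAPCMCurve

/-- Let `γ` be a Legendre curve (`η(γ̇) = 0`) with null normal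
(`g(γ̇,γ̇) = 1`, `∇_{γ̇}γ̇ ≠ 0`, `g(∇_{γ̇}γ̇,∇_{γ̇}γ̇) = 0`) in a 3-dimensional
normal almost paracontact metric manifold.  With the Cartan data `T = γ̇`,
`N = ∇_{γ̇}T`, `κ` with `∇_{γ̇}N = κN`, and `W` the field with `g(N,W) = 1`,
`g(W,W) = g(T,W) = 0`, one has `α = ±g(N,φγ̇) ≠ 0`, `T = γ̇`,
`N = −α(ξ ± φγ̇)`, `W = (−1/(2α))(ξ ∓ φγ̇)` and `κ = α′/α ± β`. -/
theorem legendre_null_normal_cartan {V : Type*} [AddCommGroup V] [Module ℝ V]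
    (M : NAPCMCurve V)
    (hunit : ∀ t, M.g t (M.T t) (M.T t) = 1)
    (hlegendre : ∀ t, M.g t (M.T t) (M.xi t) = 0)
    (hnongeo : ∀ t, M.D M.T t ≠ 0)
    (hnullnormal : ∀ t, M.g t (M.D M.T t) (M.D M.T t) = 0)
    (hadiff : Differentiable ℝ M.a)
    (N : ℝ → V) (hN : N = M.D M.T)
    (κ : ℝ → ℝ) (hκ : ∀ t, M.D N t = κ t • N t)
    (W : ℝ → V)
    (hW1 : ∀ t, M.g t (N t) (W t) = 1)
    (hW2 : ∀ t, M.g t (W t) (W t) = 0)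
    (hW3 : ∀ t, M.g t (M.T t) (W t) = 0) :
    ∀ t : ℝ, M.a t ≠ 0 ∧ ∃ s : ℝ, (s = 1 ∨ s = -1) ∧
      M.a t = s * M.g t (N t) (M.phi t (M.T t)) ∧
      N t = (-(M.a t)) • (M.xi t + s • M.phi t (M.T t)) ∧
      W t = (-1 / (2 * M.a t)) • (M.xi t - s • M.phi t (M.T t)) ∧
      κ t = deriv M.a t / M.a t + s * M.b t := by
  subst hN
  intro t
  have hNexp := M.D_T_eq_of_legendre hunit hlegendre t
  have hκa := M.mul_a_eq_of_D_eq_smul (hlegendre t) (fun s => M.g_D_T_xi (hunit s) hlegendre)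
    (hadiff t) (M.g_D_self_eq_zero hunit t) (hκ t)
  set c := M.g t (M.D M.T t) (M.phi t (M.T t))
  have hsq : M.a t * M.a t = c * c := by
    have h := hnullnormal t
    rw [hNexp, APCMCurve.g_smul_xi_add_smul_phi_T (hunit t) (hlegendre t)] at h
    linarith
  obtain ⟨s, hs, hcs⟩ : ∃ s : ℝ, (s = 1 ∨ s = -1) ∧ c = s * M.a t := by
    rcases mul_self_eq_mul_self_iff.mp hsq with h | h
    exacts [⟨1, .inl rfl, by linarith⟩, ⟨-1, .inr rfl, by linarith⟩]
  have hss : s * s = 1 := by rcases hs with rfl | rfl <;> norm_num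
  have ha : M.a t ≠ 0 := fun h0 => hnongeo t (by rw [hNexp, hcs, h0]; simp)
  have hNs : M.D M.T t = (-M.a t) • (M.xi t + s • M.phi t (M.T t)) := by
    rw [hNexp, hcs]; module
  refine ⟨ha, s, hs, by rw [hcs, ← mul_assoc, hss, one_mul], hNs,
    APCMCurve.eq_of_null_of_g_eq_one (hunit t) (hlegendre t) ha hs (hNs ▸ hW1 t) (hW2 t) (hW3 t),
    ?_⟩
  rw [hcs] at hκa
  field_simp
  linear_combination hκa
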